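/- Hydrogen relation: for every finite simple graph G, the connection Laplacian L is invertible over the integers, its inverse is L − |H|, and hence |H| = L − L⁻¹; concretely, L · (L − |H|) = 1 and (L − |H|) · L = 1 as S×S integer matrices. -/

import Mathlib

/-!
Order the simplices as vertices first, then edges, and let `N` be the vertex–edge incidence
matrix. Two distinct edges of a simple graph share at most one vertex and an edge has two, so
`NᵀN = K + 1` with `K` the touching relation on edges; hence `L = [[1, N], [Nᵀ, NᵀN - 1]]`.
Since `|d|` is the single block `Nᵀ`, `|H| = diag(NNᵀ, NᵀN)` and
`L - |H| = [[1 - NNᵀ, N], [Nᵀ, -1]]`. Block multiplication shows that these two matrices are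
mutually inverse for any `N`.
-/

open Matrix

variable {V : Type*} [Fintype V] [DecidableEq V]

/-- The simplices of the 1-dimensional simplicial complex of a graph: vertices and edges. -/
abbrev Simplex (G : SimpleGraph V) [DecidableRel G.Adj] := V ⊕ G.edgeSet

variable (G : SimpleGraph V) [DecidableRel G.Adj]

/-- The vertex set of a simplex. -/
def sVerts : Simplex G → Set V
  | Sum.inl u => {u}
  | Sum.inr f => {w | w ∈ (f : Sym2 V)}

instance (x : Simplex G) (w : V) : Decidable (w ∈ sVerts G x) :=
  match x with
  | Sum.inl u => decidable_of_iff (w = u) (by simp [sVerts])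
  | Sum.inr f => decidable_of_iff (w ∈ (f : Sym2 V)) (by simp [sVerts])

/-- Two simplices touch if their vertex sets intersect. -/
def touches (x y : Simplex G) : Prop := ∃ w, w ∈ sVerts G x ∧ w ∈ sVerts G y

instance : DecidableRel (touches G) := fun _ _ => Fintype.decidableExistsFintype

/-- The connection Laplacian. -/
def connL : Matrix (Simplex G) (Simplex G) ℤ :=
  Matrix.of fun x y => if touches G x y then 1 else 0

/-- The sign-less incidence matrix. -/
def absd : Matrix (Simplex G) (Simplex G) ℤ :=
  Matrix.of fun a b =>
    match a, b with
    | Sum.inr f, Sum.inl u => if u ∈ (f : Sym2 V) then 1 else 0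
    | _, _ => 0

/-- The sign-less Hodge Laplacian. -/
def absH : Matrix (Simplex G) (Simplex G) ℤ := (absd G + (absd G)ᵀ) ^ 2

section BlockAlgebra

variable {m n R : Type*} [Fintype m] [Fintype n] [DecidableEq m] [DecidableEq n] [Ring R]

theorem fromBlocks_connection_inverse (B : Matrix n m R) (C : Matrix m n R) :
    fromBlocks 1 C B (B * C - 1) * fromBlocks (1 - C * B) C B (-1) = 1 ∧
      fromBlocks (1 - C * B) C B (-1) * fromBlocks 1 C B (B * C - 1) = 1 := by
  simp only [fromBlocks_multiply, ← fromBlocks_one]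
  constructor <;> congr 1
  all_goals
    simp only [Matrix.mul_sub, Matrix.sub_mul, Matrix.mul_one, Matrix.one_mul, Matrix.mul_neg,
      Matrix.neg_mul, Matrix.mul_assoc]
    abel

end BlockAlgebra

theorem Sym2.sum_mem_mul_mem {R : Type*} [Semiring R] {a b : V} (hab : a ≠ b) (e : Sym2 V) :
    ∑ w : V, (if w ∈ s(a, b) then (1 : R) else 0) * (if w ∈ e then 1 else 0) =
      (if ∃ w, w ∈ s(a, b) ∧ w ∈ e then 1 else 0) + (if s(a, b) = e then 1 else 0) := by
  rw [Fintype.sum_eq_add a b hab fun w hw => by simp [hw.1, hw.2]]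
  have hshared : (∃ w, w ∈ s(a, b) ∧ w ∈ e) ↔ a ∈ e ∨ b ∈ e := by simp
  have hboth : s(a, b) = e ↔ a ∈ e ∧ b ∈ e := by rw [Sym2.mem_and_mem_iff hab, eq_comm]
  rw [if_congr hshared rfl rfl, if_congr hboth rfl rfl]
  by_cases ha : a ∈ e <;> by_cases hb : b ∈ e <;> simp [ha, hb]

def SimpleGraph.edgeIncMatrix {W : Type*} [DecidableEq W] (H : SimpleGraph W) :
    Matrix W H.edgeSet ℤ :=
  of fun u f => if u ∈ (f : Sym2 W) then 1 else 0

theorem edgeIncMatrix_transpose_mul_apply (f g : G.edgeSet) :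
    ((G.edgeIncMatrix)ᵀ * G.edgeIncMatrix) f g =
      (if touches G (Sum.inr f) (Sum.inr g) then 1 else 0) + (if f = g then 1 else 0) := by
  obtain ⟨e, he⟩ := f
  induction e using Sym2.inductionOn with
  | hf a b =>
    have hab : a ≠ b := G.ne_of_adj he
    simpa [SimpleGraph.edgeIncMatrix, mul_apply, touches, sVerts, Subtype.ext_iff] using
      Sym2.sum_mem_mul_mem (R := ℤ) hab (g : Sym2 V)

theorem connL_eq_fromBlocks :
    connL G = fromBlocks 1 G.edgeIncMatrix (G.edgeIncMatrix)ᵀ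
      ((G.edgeIncMatrix)ᵀ * G.edgeIncMatrix - 1) := by
  ext (u | f) (v | g)
  · simp [connL, touches, sVerts, one_apply, eq_comm]
  · simp [connL, touches, sVerts, SimpleGraph.edgeIncMatrix]
  · simp [connL, touches, sVerts, SimpleGraph.edgeIncMatrix]
  · rw [fromBlocks_apply₂₂, Matrix.sub_apply, edgeIncMatrix_transpose_mul_apply, one_apply,
      add_sub_cancel_right]
    rfl

theorem absH_eq_fromBlocks :
    absH G = fromBlocks (G.edgeIncMatrix * (G.edgeIncMatrix)ᵀ) 0 0
      ((G.edgeIncMatrix)ᵀ * G.edgeIncMatrix) := by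
  have habsd : absd G = fromBlocks 0 0 (G.edgeIncMatrix)ᵀ 0 := by
    ext (u | f) (v | g) <;> simp [absd, SimpleGraph.edgeIncMatrix]
  simp [absH, habsd, fromBlocks_transpose, fromBlocks_add, sq, fromBlocks_multiply]

theorem connL_sub_absH_eq_fromBlocks :
    connL G - absH G =
      fromBlocks (1 - G.edgeIncMatrix * (G.edgeIncMatrix)ᵀ) G.edgeIncMatrix
        (G.edgeIncMatrix)ᵀ (-1) := by
  rw [connL_eq_fromBlocks, absH_eq_fromBlocks, sub_eq_add_neg, fromBlocks_neg, fromBlocks_add]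
  congr 1 <;> abel

theorem hydrogen_relation :
    connL G * (connL G - absH G) = 1 ∧ (connL G - absH G) * connL G = 1 := by
  rw [connL_sub_absH_eq_fromBlocks, connL_eq_fromBlocks]
  exact fromBlocks_connection_inverse _ _
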